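/- arXiv:2405.14583 — 8 statements merged into one kernel-verified Lean document; each statement's English description precedes it below -/
import Mathlib

section
/- Let δ be a degree −1 endomorphism of E and let α, α′ be two degree +1 endomorphisms of E satisfying δ∘α + α∘δ = id and δ∘α′ + α′∘δ = id. Then for every degree −1 endomorphism u of E satisfying δ∘u + u∘δ = 0, one has Trs(α∘u) = Trs(α′∘u). (This is the independence on the choice of homotopy α of the 1-form κ of Proposition 2.2.) -/
/-- Supertrace of a supercommutator `δ*A + A*δ` (δ of degree -1, A of degree +1) vanishes. -/
lemma aux_super {V : Type} [AddCommGroup V] [Module ℂ V] [FiniteDimensional ℂ V]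
    (p q : ℤ) (π : ℤ → Module.End ℂ V)
    (hsupp : ∀ i, i ∉ Finset.Icc p q → π i = 0)
    (δ A : Module.End ℂ V)
    (hδ : ∀ i, δ * π i = π (i - 1) * δ)
    (hA : ∀ i, A * π i = π (i + 1) * A) :
    ∑ i ∈ Finset.Icc p q, ((Int.negOnePow i : ℤ) : ℂ) *
        LinearMap.trace ℂ V (π i * (δ * A + A * δ)) = 0 := by
  have key : ∀ i : ℤ, LinearMap.trace ℂ V (π i * (δ * A))
      = LinearMap.trace ℂ V (π (i + 1) * (A * δ)) := by
    intro i
    calc LinearMap.trace ℂ V (π i * (δ * A))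
        = LinearMap.trace ℂ V ((π i * δ) * A) := by rw [mul_assoc]
      _ = LinearMap.trace ℂ V (A * (π i * δ)) := LinearMap.trace_mul_comm ℂ _ _
      _ = LinearMap.trace ℂ V ((A * π i) * δ) := by rw [mul_assoc]
      _ = LinearMap.trace ℂ V (π (i + 1) * (A * δ)) := by rw [hA, mul_assoc]
  have split : ∑ i ∈ Finset.Icc p q, ((Int.negOnePow i : ℤ) : ℂ) *
      LinearMap.trace ℂ V (π i * (δ * A + A * δ))
      = (∑ i ∈ Finset.Icc p q, ((Int.negOnePow i : ℤ) : ℂ) *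
          LinearMap.trace ℂ V (π i * (δ * A)))
        + ∑ i ∈ Finset.Icc p q, ((Int.negOnePow i : ℤ) : ℂ) *
          LinearMap.trace ℂ V (π i * (A * δ)) := by
    rw [← Finset.sum_add_distrib]
    refine Finset.sum_congr rfl fun i _ => ?_
    rw [mul_add, map_add, mul_add]
  rw [split]
  -- first sum, reindexed
  have h1 : (∑ i ∈ Finset.Icc p q, ((Int.negOnePow i : ℤ) : ℂ) *
      LinearMap.trace ℂ V (π i * (δ * A)))
      = ∑ j ∈ Finset.Icc (p + 1) (q + 1), ((Int.negOnePow (j - 1) : ℤ) : ℂ) *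
          LinearMap.trace ℂ V (π j * (A * δ)) := by
    rw [← Finset.map_add_right_Icc p q 1, Finset.sum_map]
    refine Finset.sum_congr rfl fun i _ => ?_
    simp only [addRightEmbedding_apply, add_sub_cancel_right, key i]
  rw [h1]
  -- extend both sums to Icc p (q+1)
  have hzero_top : LinearMap.trace ℂ V (π (q + 1) * (A * δ)) = 0 := by
    rw [hsupp (q + 1) (by simp), zero_mul, map_zero]
  have hzero_bot : LinearMap.trace ℂ V (π p * (A * δ)) = 0 := by
    have : δ * π p = 0 := by rw [hδ p, hsupp (p - 1) (by simp), zero_mul]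
    calc LinearMap.trace ℂ V (π p * (A * δ))
        = LinearMap.trace ℂ V ((A * δ) * π p) := LinearMap.trace_mul_comm ℂ _ _
      _ = 0 := by rw [mul_assoc, this, mul_zero, map_zero]
  have e1 : ∑ j ∈ Finset.Icc (p + 1) (q + 1), ((Int.negOnePow (j - 1) : ℤ) : ℂ) *
      LinearMap.trace ℂ V (π j * (A * δ))
      = ∑ j ∈ Finset.Icc p (q + 1), ((Int.negOnePow (j - 1) : ℤ) : ℂ) *
          LinearMap.trace ℂ V (π j * (A * δ)) := by
    refine Finset.sum_subset (Finset.Icc_subset_Icc (by linarith) le_rfl) ?_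
    intro x hx hx'
    simp only [Finset.mem_Icc] at hx hx'
    have : x = p := by omega
    rw [this, hzero_bot, mul_zero]
  have e2 : ∑ j ∈ Finset.Icc p q, ((Int.negOnePow j : ℤ) : ℂ) *
      LinearMap.trace ℂ V (π j * (A * δ))
      = ∑ j ∈ Finset.Icc p (q + 1), ((Int.negOnePow j : ℤ) : ℂ) *
          LinearMap.trace ℂ V (π j * (A * δ)) := by
    refine Finset.sum_subset (Finset.Icc_subset_Icc le_rfl (by linarith)) ?_
    intro x hx hx'
    simp only [Finset.mem_Icc] at hx hx'
    have : x = q + 1 := by omega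
    rw [this, hzero_top, mul_zero]
  rw [e1, e2, ← Finset.sum_add_distrib]
  refine Finset.sum_eq_zero fun j _ => ?_
  have hn : (j - 1).negOnePow = -j.negOnePow := by
    conv_rhs => rw [show j = j - 1 + 1 by ring]
    rw [Int.negOnePow_succ, neg_neg]
  have : ((Int.negOnePow (j - 1) : ℤ) : ℂ) = -((Int.negOnePow j : ℤ) : ℂ) := by
    rw [hn]; push_cast; ring
  rw [this]
  ring

theorem stmt0 {V : Type} [AddCommGroup V] [Module ℂ V] [FiniteDimensional ℂ V]
    (p q : ℤ) (hpq : p ≤ q) (π : ℤ → Module.End ℂ V)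
    (hidem : ∀ i, π i * π i = π i)
    (horth : ∀ i j, i ≠ j → π i * π j = 0)
    (hsupp : ∀ i, i ∉ Finset.Icc p q → π i = 0)
    (hsum : ∑ i ∈ Finset.Icc p q, π i = 1)
    (δ α α' u : Module.End ℂ V)
    (hδ : ∀ i, δ * π i = π (i - 1) * δ)
    (hα : ∀ i, α * π i = π (i + 1) * α)
    (hα' : ∀ i, α' * π i = π (i + 1) * α')
    (hu : ∀ i, u * π i = π (i - 1) * u)
    (hhom : δ * α + α * δ = 1)
    (hhom' : δ * α' + α' * δ = 1)
    (hu0 : δ * u + u * δ = 0) :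
    ∑ i ∈ Finset.Icc p q, ((Int.negOnePow i : ℤ) : ℂ) *
        LinearMap.trace ℂ V (π i * (α * u))
      = ∑ i ∈ Finset.Icc p q, ((Int.negOnePow i : ℤ) : ℂ) *
        LinearMap.trace ℂ V (π i * (α' * u)) := by
  obtain ⟨β, hβ⟩ : ∃ β : Module.End ℂ V, β = α - α' := ⟨_, rfl⟩
  obtain ⟨A, hA⟩ : ∃ A : Module.End ℂ V, A = α * (β * u) := ⟨_, rfl⟩
  have h1 : δ * β + β * δ = 0 := by
    rw [hβ, mul_sub, sub_mul, sub_add_sub_comm, hhom, hhom', sub_self]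
  have hδβ : δ * β = -(β * δ) := eq_neg_of_add_eq_zero_left h1
  have hδu : δ * u = -(u * δ) := eq_neg_of_add_eq_zero_left hu0
  have hcomm : δ * (β * u) = (β * u) * δ := by
    calc δ * (β * u) = (δ * β) * u := by rw [mul_assoc]
      _ = -(β * δ) * u := by rw [hδβ]
      _ = -(β * (δ * u)) := by rw [neg_mul, mul_assoc]
      _ = -(β * -(u * δ)) := by rw [hδu]
      _ = β * (u * δ) := by rw [mul_neg, neg_neg]
      _ = (β * u) * δ := by rw [mul_assoc]
  have keyid : β * u = δ * A + A * δ := by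
    calc β * u = (δ * α + α * δ) * (β * u) := by rw [hhom, one_mul]
      _ = δ * (α * (β * u)) + α * (δ * (β * u)) := by
          rw [add_mul, mul_assoc, mul_assoc]
      _ = δ * A + α * ((β * u) * δ) := by rw [hcomm, hA]
      _ = δ * A + A * δ := by rw [hA, mul_assoc α (β * u) δ]
  have hβdeg : ∀ i, β * π i = π (i + 1) * β := by
    intro i; rw [hβ, sub_mul, hα, hα', ← mul_sub]
  have hAdeg : ∀ i, A * π i = π (i + 1) * A := by
    intro i
    calc A * π i = α * (β * (u * π i)) := by rw [hA, mul_assoc, mul_assoc]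
      _ = α * ((β * π (i - 1)) * u) := by rw [hu, mul_assoc]
      _ = α * (π (i - 1 + 1) * (β * u)) := by rw [hβdeg, mul_assoc]
      _ = (α * π i) * (β * u) := by rw [sub_add_cancel, mul_assoc]
      _ = π (i + 1) * A := by rw [hα, hA, mul_assoc]
  have main := aux_super p q π hsupp δ A hδ hAdeg
  rw [← keyid] at main
  rw [← sub_eq_zero, ← Finset.sum_sub_distrib, ← main]
  refine Finset.sum_congr rfl fun i _ => ?_
  rw [hβ, sub_mul, mul_sub, map_sub, mul_sub]
end

section
/- Let δ be a degree −1 endomorphism of E and let α be a degree +1 endomorphism of E satisfying δ∘α + α∘δ = id. Then for every degree-0 endomorphism f of E one has Trs(α ∘ (δ∘f − f∘δ)) = Trs(f). (This is the algebraic content of identity (2.15) in Proposition 2.2.) -/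
/-! Graded cyclicity of the trace gives `Trs (b * a) = (-1)^k Trs (a * b)` for `a` of degree `k`.
Applied to `a = δ` and `b = α * f` it turns `Trs (α * f * δ)` into `-Trs (δ * α * f)`, so that
`Trs (α * (δ * f - f * δ)) = Trs ((α * δ + δ * α) * f) = Trs f`. -/

open Finset

section Supertrace

variable {R M : Type*} [CommRing R] [AddCommGroup M] [Module R M]

noncomputable def supertrace (s : Finset ℤ) (π : ℤ → Module.End R M) (A : Module.End R M) : R :=
  ∑ i ∈ s, ((i.negOnePow : ℤ) : R) * LinearMap.trace R M (π i * A)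

variable {s : Finset ℤ} {π : ℤ → Module.End R M}

theorem supertrace_add (A B : Module.End R M) :
    supertrace s π (A + B) = supertrace s π A + supertrace s π B := by
  simp only [supertrace, mul_add, map_add, sum_add_distrib]

theorem supertrace_sub (A B : Module.End R M) :
    supertrace s π (A - B) = supertrace s π A - supertrace s π B := by
  simp only [supertrace, mul_sub, map_sub, sum_sub_distrib]

theorem finsum_mul_trace_eq_sum (hs : ∀ i ∉ s, π i = 0) (c : ℤ → R) (A : Module.End R M) :
    ∑ᶠ i, c i * LinearMap.trace R M (π i * A) = ∑ i ∈ s, c i * LinearMap.trace R M (π i * A) := by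
  refine finsum_eq_sum_of_support_subset _ fun i hi => ?_
  by_contra hi'
  simp [hs i hi'] at hi

theorem supertrace_mul_comm_of_degree (hs : ∀ i ∉ s, π i = 0) {k : ℤ} {a : Module.End R M}
    (ha : ∀ i, a * π i = π (i + k) * a) (b : Module.End R M) :
    supertrace s π (b * a) = ((k.negOnePow : ℤ) : R) * supertrace s π (a * b) := by
  have htrace : ∀ i, LinearMap.trace R M (π i * (b * a)) =
      LinearMap.trace R M (π (i + k) * (a * b)) := fun i => by
    rw [← mul_assoc, LinearMap.trace_mul_comm, ← mul_assoc, ha, mul_assoc]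
  calc supertrace s π (b * a)
      = ∑ᶠ i, ((i.negOnePow : ℤ) : R) * LinearMap.trace R M (π (i + k) * (a * b)) := by
        rw [supertrace, ← finsum_mul_trace_eq_sum hs]
        simp only [htrace]
    _ = ∑ᶠ j, (((j - k).negOnePow : ℤ) : R) * LinearMap.trace R M (π j * (a * b)) := by
        rw [← finsum_comp_equiv (Equiv.addRight k)
          (f := fun j => (((j - k).negOnePow : ℤ) : R) * LinearMap.trace R M (π j * (a * b)))]
        simp only [Equiv.coe_addRight, add_sub_cancel_right]
    _ = ((k.negOnePow : ℤ) : R) * supertrace s π (a * b) := by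
        rw [finsum_mul_trace_eq_sum hs, supertrace, mul_sum]
        refine sum_congr rfl fun j _ => ?_
        rw [Int.negOnePow_sub]
        push_cast
        ring

end Supertrace

theorem stmt1_general {V : Type} [AddCommGroup V] [Module ℂ V]
    (p q : ℤ) (π : ℤ → Module.End ℂ V)
    (hsupp : ∀ i, i ∉ Finset.Icc p q → π i = 0)
    (δ α f : Module.End ℂ V)
    (hδ : ∀ i, δ * π i = π (i - 1) * δ)
    (hhom : δ * α + α * δ = 1) :
    ∑ i ∈ Finset.Icc p q, ((Int.negOnePow i : ℤ) : ℂ) *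
        LinearMap.trace ℂ V (π i * (α * (δ * f - f * δ)))
      = ∑ i ∈ Finset.Icc p q, ((Int.negOnePow i : ℤ) : ℂ) *
        LinearMap.trace ℂ V (π i * f) := by
  change supertrace (Icc p q) π (α * (δ * f - f * δ)) = supertrace (Icc p q) π f
  have hδ' : ∀ i, δ * π i = π (i + -1) * δ := fun i => by rw [hδ, sub_eq_add_neg]
  calc supertrace (Icc p q) π (α * (δ * f - f * δ))
      = supertrace (Icc p q) π (α * δ * f) - supertrace (Icc p q) π (α * f * δ) := by
        rw [mul_sub, supertrace_sub, mul_assoc, mul_assoc]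
    _ = supertrace (Icc p q) π (α * δ * f) + supertrace (Icc p q) π (δ * α * f) := by
        rw [supertrace_mul_comm_of_degree hsupp hδ', mul_assoc δ]
        simp
    _ = supertrace (Icc p q) π f := by
        rw [← supertrace_add, ← add_mul, add_comm, hhom, one_mul]

theorem stmt1 {V : Type} [AddCommGroup V] [Module ℂ V] [FiniteDimensional ℂ V]
    (p q : ℤ) (hpq : p ≤ q) (π : ℤ → Module.End ℂ V)
    (hidem : ∀ i, π i * π i = π i)
    (horth : ∀ i j, i ≠ j → π i * π j = 0)
    (hsupp : ∀ i, i ∉ Finset.Icc p q → π i = 0)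
    (hsum : ∑ i ∈ Finset.Icc p q, π i = 1)
    (δ α f : Module.End ℂ V)
    (hδ : ∀ i, δ * π i = π (i - 1) * δ)
    (hα : ∀ i, α * π i = π (i + 1) * α)
    (hf : ∀ i, f * π i = π i * f)
    (hhom : δ * α + α * δ = 1) :
    ∑ i ∈ Finset.Icc p q, ((Int.negOnePow i : ℤ) : ℂ) *
        LinearMap.trace ℂ V (π i * (α * (δ * f - f * δ)))
      = ∑ i ∈ Finset.Icc p q, ((Int.negOnePow i : ℤ) : ℂ) *
        LinearMap.trace ℂ V (π i * f) :=
  stmt1_general p q π hsupp δ α f hδ hhom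
end

section
/- Let d be a differential of degree 1 and δ a differential of degree −1 on E. The endomorphism [d,δ] = d∘δ + δ∘d is invertible if and only if (E,d) is exact, (E,δ) is exact, and range d ∩ range δ = 0. Under these conditions, E = range d ⊕ range δ. (Proposition 2.7.) -/
/-! Since `d²` and `δ²` vanish, `L = dδ + δd` commutes with `d` and `δ`, so for `x ∈ ker d`
we get `x = L⁻¹ (d δ x) = d (L⁻¹ δ x)`, and `L` kills `ker d ⊓ ker δ`. Conversely, if `L x = 0`
then `dδx = -δdx` lies in `range d ⊓ range δ = 0`, which puts `δx`, `dx` and then `x` in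
`ker d ⊓ ker δ = range d ⊓ range δ`. Finally `x = d (δ L⁻¹x) + δ (d L⁻¹x)`. -/

theorem Commute.mul_add_mul_of_mul_self_eq_zero {A : Type*} [Ring A] {a b : A} (ha : a * a = 0) :
    Commute (a * b + b * a) a := by
  simp only [Commute, SemiconjBy, add_mul, mul_add, mul_assoc, ha, mul_zero, add_zero]
  rw [← mul_assoc a a, ha, zero_mul, zero_add]

namespace Module.End

variable {R M : Type*} [CommRing R] [AddCommGroup M] [Module R M] {d δ : Module.End R M}

theorem range_le_ker_of_mul_self_eq_zero (hdd : d * d = 0) : LinearMap.range d ≤ LinearMap.ker d :=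
  LinearMap.range_le_ker_iff.mpr hdd

theorem ker_le_range_of_isUnit_mul_add_mul (hdd : d * d = 0) (hu : IsUnit (d * δ + δ * d)) :
    LinearMap.ker d ≤ LinearMap.range d := by
  intro x hx
  set g : Module.End R M := ↑hu.unit⁻¹
  have hgd : Commute g d :=
    Commute.units_inv_left (by rw [hu.unit_spec]; exact .mul_add_mul_of_mul_self_eq_zero hdd)
  have hLx : (d * δ + δ * d) x = d (δ x) := by
    simp [LinearMap.mem_ker.mp hx]
  refine ⟨g (δ x), ?_⟩
  calc d (g (δ x)) = g (d (δ x)) := LinearMap.congr_fun hgd.eq.symm (δ x)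
    _ = (g * (d * δ + δ * d)) x := by rw [mul_apply, hLx]
    _ = x := by rw [hu.val_inv_mul, one_apply]

theorem ker_eq_range_of_isUnit_mul_add_mul (hdd : d * d = 0) (hu : IsUnit (d * δ + δ * d)) :
    LinearMap.ker d = LinearMap.range d :=
  le_antisymm (ker_le_range_of_isUnit_mul_add_mul hdd hu) (range_le_ker_of_mul_self_eq_zero hdd)

theorem ker_inf_ker_le_ker_mul_add_mul :
    LinearMap.ker d ⊓ LinearMap.ker δ ≤ LinearMap.ker (d * δ + δ * d) := by
  rintro x ⟨hdx, hδx⟩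
  simp [LinearMap.mem_ker.mp hdx, LinearMap.mem_ker.mp hδx]

theorem range_inf_range_eq_bot_of_isUnit_mul_add_mul (hdd : d * d = 0) (hδδ : δ * δ = 0)
    (hu : IsUnit (d * δ + δ * d)) : LinearMap.range d ⊓ LinearMap.range δ = ⊥ := by
  refine eq_bot_iff.mpr ?_
  calc LinearMap.range d ⊓ LinearMap.range δ ≤ LinearMap.ker d ⊓ LinearMap.ker δ :=
        inf_le_inf (range_le_ker_of_mul_self_eq_zero hdd) (range_le_ker_of_mul_self_eq_zero hδδ)
    _ ≤ LinearMap.ker (d * δ + δ * d) := ker_inf_ker_le_ker_mul_add_mul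
    _ = ⊥ := LinearMap.ker_eq_bot.mpr ((Module.End.isUnit_iff _).mp hu).1

theorem ker_mul_add_mul_eq_bot (hdd : d * d = 0) (hδδ : δ * δ = 0)
    (hd : LinearMap.ker d = LinearMap.range d) (hδ : LinearMap.ker δ = LinearMap.range δ)
    (hdδ : LinearMap.range d ⊓ LinearMap.range δ = ⊥) :
    LinearMap.ker (d * δ + δ * d) = ⊥ := by
  have hker : LinearMap.ker d ⊓ LinearMap.ker δ = ⊥ := by rw [hd, hδ, hdδ]
  have mem_ker_inf {y : M} (h₁ : d y = 0) (h₂ : δ y = 0) : y = 0 :=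
    (Submodule.mem_bot R).mp (hker ▸ ⟨h₁, h₂⟩)
  refine eq_bot_iff.mpr fun x hx => (Submodule.mem_bot R).mpr ?_
  have hsum : d (δ x) + δ (d x) = 0 := hx
  have hdδx : d (δ x) = 0 := by
    have hmem : d (δ x) ∈ LinearMap.range d ⊓ LinearMap.range δ :=
      ⟨⟨δ x, rfl⟩, ⟨-d x, by rw [map_neg, eq_neg_of_add_eq_zero_left hsum]⟩⟩
    exact (Submodule.mem_bot R).mp (hdδ ▸ hmem)
  have hδdx : δ (d x) = 0 := by rwa [hdδx, zero_add] at hsum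
  have hδx : δ x = 0 := mem_ker_inf hdδx (LinearMap.congr_fun hδδ x)
  have hdx : d x = 0 := mem_ker_inf (LinearMap.congr_fun hdd x) hδdx
  exact mem_ker_inf hdx hδx

theorem range_mul_add_mul_le_sup :
    LinearMap.range (d * δ + δ * d) ≤ LinearMap.range d ⊔ LinearMap.range δ := by
  rintro _ ⟨x, rfl⟩
  exact Submodule.add_mem_sup ⟨δ x, rfl⟩ ⟨d x, rfl⟩

end Module.End

open Module.End in
theorem stmt4_general {V : Type} [AddCommGroup V] [Module ℂ V] [FiniteDimensional ℂ V]
    (d δ : Module.End ℂ V)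
    (hdd : d * d = 0)
    (hδδ : δ * δ = 0) :
    (IsUnit (d * δ + δ * d) ↔
      (LinearMap.ker d = LinearMap.range d ∧ LinearMap.ker δ = LinearMap.range δ ∧
        LinearMap.range d ⊓ LinearMap.range δ = ⊥)) ∧
    ((LinearMap.ker d = LinearMap.range d ∧ LinearMap.ker δ = LinearMap.range δ ∧
        LinearMap.range d ⊓ LinearMap.range δ = ⊥) →
      LinearMap.range d ⊔ LinearMap.range δ = ⊤) := by
  have hiff : IsUnit (d * δ + δ * d) ↔
      (LinearMap.ker d = LinearMap.range d ∧ LinearMap.ker δ = LinearMap.range δ ∧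
        LinearMap.range d ⊓ LinearMap.range δ = ⊥) := by
    refine ⟨fun hu => ⟨ker_eq_range_of_isUnit_mul_add_mul hdd hu, ?_,
      range_inf_range_eq_bot_of_isUnit_mul_add_mul hdd hδδ hu⟩, fun ⟨hd, hδ, hdδ⟩ =>
      (LinearMap.isUnit_iff_ker_eq_bot _).mpr (ker_mul_add_mul_eq_bot hdd hδδ hd hδ hdδ)⟩
    rw [add_comm] at hu
    exact ker_eq_range_of_isUnit_mul_add_mul hδδ hu
  refine ⟨hiff, fun h => top_unique ?_⟩
  rw [← (LinearMap.isUnit_iff_range_eq_top _).mp (hiff.mpr h)]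
  exact range_mul_add_mul_le_sup

theorem stmt4 {V : Type} [AddCommGroup V] [Module ℂ V] [FiniteDimensional ℂ V]
    (p q : ℤ) (hpq : p ≤ q) (π : ℤ → Module.End ℂ V)
    (hidem : ∀ i, π i * π i = π i)
    (horth : ∀ i j, i ≠ j → π i * π j = 0)
    (hsupp : ∀ i, i ∉ Finset.Icc p q → π i = 0)
    (hsum : ∑ i ∈ Finset.Icc p q, π i = 1)
    (d δ : Module.End ℂ V)
    (hd : ∀ i, d * π i = π (i + 1) * d)
    (hδ : ∀ i, δ * π i = π (i - 1) * δ)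
    (hdd : d * d = 0)
    (hδδ : δ * δ = 0) :
    (IsUnit (d * δ + δ * d) ↔
      (LinearMap.ker d = LinearMap.range d ∧ LinearMap.ker δ = LinearMap.range δ ∧
        LinearMap.range d ⊓ LinearMap.range δ = ⊥)) ∧
    ((LinearMap.ker d = LinearMap.range d ∧ LinearMap.ker δ = LinearMap.range δ ∧
        LinearMap.range d ⊓ LinearMap.range δ = ⊥) →
      LinearMap.range d ⊔ LinearMap.range δ = ⊤) :=
  stmt4_general d δ hdd hδδ
end

section
/- Let d be a differential of degree 1 and δ a differential of degree −1 on E such that [d,δ] = d∘δ + δ∘d is invertible. Then [d,δ]⁻¹ commutes with both d and δ; the endomorphism T = [d,δ]⁻¹∘δ satisfies d∘T + T∘d = id (so T is a homotopy for d); d restricts to a linear bijection from range δ onto range d; and δ restricts to a linear bijection from range d onto range δ. (Claims established in and after the proof of Proposition 2.7.) -/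
/-! Since `d² = 0`, `d` commutes with `[d,δ] = dδ + δd`, hence with its inverse; then
`d (g δ) + (g δ) d = g (dδ + δd) = 1` for `g = [d,δ]⁻¹`, and symmetrically for `δ`. A homotopy
`T = g δ` with `T δ = 0` and `range T ⊆ range δ` inverts `d` between `range δ` and `range d`:
on `range δ` the identity `dT + Td = 1` reduces to `T d = 1`, and on `range d` to `d T = 1`. -/

section Ring

variable {R : Type*} [Ring R] {a b : R}

theorem commute_mul_add_mul_of_mul_self_eq_zero (ha : a * a = 0) : Commute a (a * b + b * a) := by
  simp only [Commute, SemiconjBy, mul_add, add_mul, ← mul_assoc, ha, zero_mul, zero_add]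
  rw [mul_assoc b, ha, mul_zero, add_zero]

theorem commute_units_inv_of_mul_self_eq_zero (ha : a * a = 0) (u : Rˣ)
    (hu : (u : R) = a * b + b * a) : Commute (↑u⁻¹ : R) a := by
  have hau : Commute a u := hu ▸ commute_mul_add_mul_of_mul_self_eq_zero ha
  exact hau.units_inv_right.symm

theorem mul_units_inv_mul_add_units_inv_mul_mul_eq_one (ha : a * a = 0) (u : Rˣ)
    (hu : (u : R) = a * b + b * a) : a * (↑u⁻¹ * b) + ↑u⁻¹ * b * a = 1 := by
  rw [← mul_assoc, ← (commute_units_inv_of_mul_self_eq_zero ha u hu).eq, mul_assoc, mul_assoc,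
    ← mul_add, ← hu, Units.inv_mul]

end Ring

section Module

variable {R M : Type*} [Semiring R] [AddCommMonoid M] [Module R M]

theorem Module.End.bijOn_range_of_mul_add_mul_eq_one {f g s : Module.End R M} (hff : f * f = 0)
    (hss : s * s = 0) (hgs : Commute g s) (hhom : f * (g * s) + g * s * f = 1) :
    Set.BijOn f (LinearMap.range s) (LinearMap.range f) := by
  have hhom' (x : M) : f (g (s x)) + g (s (f x)) = x := by
    simpa using LinearMap.congr_fun hhom x
  refine Set.InvOn.bijOn (f' := g * s) ⟨?_, ?_⟩ ?_ ?_
  · rintro _ ⟨x, rfl⟩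
    have hsx : s (s x) = 0 := by simpa using LinearMap.congr_fun hss x
    simpa [hsx] using hhom' (s x)
  · rintro _ ⟨x, rfl⟩
    have hfx : f (f x) = 0 := by simpa using LinearMap.congr_fun hff x
    simpa [hfx] using hhom' (f x)
  · rintro _ ⟨x, rfl⟩
    exact ⟨s x, rfl⟩
  · rintro y -
    exact ⟨g y, by simpa using LinearMap.congr_fun hgs.eq.symm y⟩

end Module

theorem stmt5_general {V : Type} [AddCommGroup V] [Module ℂ V]
    (d δ : Module.End ℂ V)
    (hdd : d * d = 0)
    (hδδ : δ * δ = 0)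
    (ginv : Module.End ℂ V)
    (hginv₁ : ginv * (d * δ + δ * d) = 1)
    (hginv₂ : (d * δ + δ * d) * ginv = 1) :
    ginv * d = d * ginv ∧
    ginv * δ = δ * ginv ∧
    d * (ginv * δ) + (ginv * δ) * d = 1 ∧
    Set.BijOn (⇑d) (LinearMap.range δ : Set V) (LinearMap.range d : Set V) ∧
    Set.BijOn (⇑δ) (LinearMap.range d : Set V) (LinearMap.range δ : Set V) := by
  let u : (Module.End ℂ V)ˣ := ⟨d * δ + δ * d, ginv, hginv₂, hginv₁⟩
  have hgd : Commute ginv d := commute_units_inv_of_mul_self_eq_zero hdd u rfl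
  have hgδ : Commute ginv δ := commute_units_inv_of_mul_self_eq_zero hδδ u (add_comm _ _)
  have hom_d := mul_units_inv_mul_add_units_inv_mul_mul_eq_one hdd u rfl
  have hom_δ := mul_units_inv_mul_add_units_inv_mul_mul_eq_one hδδ u (add_comm _ _)
  exact ⟨hgd.eq, hgδ.eq, hom_d, Module.End.bijOn_range_of_mul_add_mul_eq_one hdd hδδ hgδ hom_d,
    Module.End.bijOn_range_of_mul_add_mul_eq_one hδδ hdd hgd hom_δ⟩

theorem stmt5 {V : Type} [AddCommGroup V] [Module ℂ V] [FiniteDimensional ℂ V]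
    (p q : ℤ) (hpq : p ≤ q) (π : ℤ → Module.End ℂ V)
    (hidem : ∀ i, π i * π i = π i)
    (horth : ∀ i j, i ≠ j → π i * π j = 0)
    (hsupp : ∀ i, i ∉ Finset.Icc p q → π i = 0)
    (hsum : ∑ i ∈ Finset.Icc p q, π i = 1)
    (d δ : Module.End ℂ V)
    (hd : ∀ i, d * π i = π (i + 1) * d)
    (hδ : ∀ i, δ * π i = π (i - 1) * δ)
    (hdd : d * d = 0)
    (hδδ : δ * δ = 0)
    (ginv : Module.End ℂ V)
    (hginv₁ : ginv * (d * δ + δ * d) = 1)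
    (hginv₂ : (d * δ + δ * d) * ginv = 1) :
    ginv * d = d * ginv ∧
    ginv * δ = δ * ginv ∧
    d * (ginv * δ) + (ginv * δ) * d = 1 ∧
    Set.BijOn (⇑d) (LinearMap.range δ : Set V) (LinearMap.range d : Set V) ∧
    Set.BijOn (⇑δ) (LinearMap.range d : Set V) (LinearMap.range δ : Set V) :=
  stmt5_general d δ hdd hδδ ginv hginv₁ hginv₂
end

section
/- Let d be a differential of degree 1 and δ a differential of degree −1 on E such that [d,δ] = d∘δ + δ∘d is invertible. Then ∏_{i=p}^{q} det([d,δ]|_{E^i})^{(−1)^i} = 1. (First identity of Theorem 2.8.) -/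
/-!
Put `Δ = [d, δ]` and `N = d + δ`. Since `d² = δ² = 0`, we have `N² = Δ`, so `N` is invertible
and commutes with `Δ`; having odd degree, `N` exchanges `E^even = ⨁ E^(2i)` and
`E^odd = ⨁ E^(2i+1)`. Hence `Δ|E^even` and `Δ|E^odd` are conjugate by `N`, and the alternating
product, which equals `det (Δ|E^even) / det (Δ|E^odd)`, is `1`.
-/

open Finset

section Ring

variable {R : Type*} [Ring R]

/-- For an idempotent `P` whose range is `a`-invariant, `compress a P` acts as `a` on the range
of `P` and as the identity on its kernel, so its determinant is that of `a` restricted to the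
range of `P`. -/
def compress (a P : R) : R := a * P + (1 - P)

lemma compress_one (a : R) : compress a 1 = a := by simp [compress]

lemma compress_mul_compress {a P Q : R} (hPQ : P * Q = 0) (hPaQ : P * a * Q = 0) :
    compress a P * compress a Q = compress a (P + Q) := by
  have h : compress a P * compress a Q
      = compress a (P + Q) + a * (P * a * Q) - a * (P * Q) - P * a * Q + P * Q := by
    unfold compress; noncomm_ring
  rw [h, hPQ, hPaQ]; simp

lemma mul_compress_eq_compress_mul {a N P Q : R} (ha : N * a = a * N) (hN : N * P = Q * N) :
    N * compress a P = compress a Q * N := by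
  unfold compress
  rw [mul_add, mul_sub, ← mul_assoc, ha, mul_assoc, hN, add_mul, sub_mul, mul_assoc]
  simp

lemma map_compress_sum {ι K : Type*} [CommMonoid K] (f : R →* K) (a : R) (P : ι → R)
    (hP : ∀ i j, i ≠ j → P i * P j = 0) (haP : ∀ i j, i ≠ j → P i * a * P j = 0)
    (s : Finset ι) : f (compress a (∑ i ∈ s, P i)) = ∏ i ∈ s, f (compress a (P i)) := by
  classical
  induction s using Finset.induction_on with
  | empty => simp [compress]
  | insert i s hi ih =>
    have hne : ∀ j ∈ s, i ≠ j := fun j hj hij => hi (hij ▸ hj)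
    have hPs : P i * ∑ j ∈ s, P j = 0 :=
      mul_sum s P (P i) ▸ sum_eq_zero fun j hj => hP i j (hne j hj)
    have haPs : P i * a * ∑ j ∈ s, P j = 0 :=
      mul_sum s P _ ▸ sum_eq_zero fun j hj => haP i j (hne j hj)
    rw [sum_insert hi, prod_insert hi, ← ih, ← map_mul, compress_mul_compress hPs haPs]

lemma mul_eq_mul_of_add_eq_one {a ε η : R} (h : ε + η = 1) (hε : ε * a * ε = 0)
    (hη : η * a * η = 0) : a * ε = η * a :=
  calc a * ε = (ε + η) * a * ε := by rw [h, one_mul]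
    _ = η * a * ε := by rw [add_mul, add_mul, hε, zero_add]
    _ = η * a * (ε + η) := by rw [mul_add, hη, add_zero]
    _ = η * a := by rw [h, mul_one]

end Ring

lemma MonoidHom.map_eq_of_mul_eq_mul {M K : Type*} [Monoid M] [CommMonoid K] (f : M →* K)
    {u x y : M} (hu : IsUnit u) (h : u * x = y * u) : f x = f y := by
  have h' := congrArg f h
  rw [map_mul, map_mul, mul_comm (f y)] at h'
  exact (hu.map f).mul_left_cancel h'

lemma LinearMap.det_restrict_eq_det_compress {K V : Type*} [Field K] [AddCommGroup V]
    [Module K V] [FiniteDimensional K V] {f π : Module.End K V} (hπ : π * π = π)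
    (r : Module.End K (range π)) (hr : ∀ x : range π, (r x : V) = f x) :
    LinearMap.det r = LinearMap.det (compress f π) := by
  have hπx : ∀ x ∈ range π, π x = x := by
    rintro _ ⟨y, rfl⟩; exact congrArg (· y) hπ
  have hfπ : ∀ v, f (π v) ∈ range π := fun v => hr ⟨π v, v, rfl⟩ ▸ (r _).2
  have hinv : range π ≤ (range π).comap (compress f π) := by
    intro x hx
    simp [compress, hπx x hx, hr ⟨x, hx⟩ ▸ (r ⟨x, hx⟩).2]
  have hres : (compress f π).restrict hinv = r := by
    ext ⟨x, hx⟩; simp [compress, hπx x hx, hr]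
  have hquot : (range π).mapQ (range π) (compress f π) hinv = 1 := by
    ext v
    simp only [compress, coe_comp, Function.comp_apply, Submodule.mkQ_apply,
      Submodule.mapQ_apply, add_apply, sub_apply, Module.End.mul_apply, Module.End.one_apply]
    rw [Submodule.Quotient.eq, show f (π v) + (v - π v) - v = f (π v) - π v by abel]
    exact sub_mem (hfπ v) ⟨v, rfl⟩
  rw [det_eq_det_mul_det _ _ hinv, hres, hquot, map_one, mul_one]

namespace Graded

section Ring

variable {R : Type*} [Ring R] (π : ℤ → R)

def HasDegree (k : ℤ) (a : R) : Prop := ∀ i, a * π i = π (i + k) * a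

def evenPart (s : Finset ℤ) : R := ∑ i ∈ s with Even i, π i

def oddPart (s : Finset ℤ) : R := ∑ i ∈ s with Odd i, π i

variable {π}

lemma evenPart_add_oddPart (s : Finset ℤ) : evenPart π s + oddPart π s = ∑ i ∈ s, π i := by
  simp only [evenPart, oddPart, ← Int.not_even_iff_odd]
  exact sum_filter_add_sum_filter_not s Even π

lemma hasDegree_one : HasDegree π 0 (1 : R) := fun i => by simp

lemma HasDegree.add {k : ℤ} {a b : R} (ha : HasDegree π k a) (hb : HasDegree π k b) :
    HasDegree π k (a + b) := fun i => by rw [add_mul, mul_add, ha, hb]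

lemma HasDegree.mul {k l : ℤ} {a b : R} (ha : HasDegree π k a) (hb : HasDegree π l b) :
    HasDegree π (k + l) (a * b) := fun i => by
  rw [mul_assoc, hb, ← mul_assoc, ha, mul_assoc, add_assoc, add_comm l]

variable (horth : ∀ i j, i ≠ j → π i * π j = 0)
include horth

lemma HasDegree.mul_mul_eq_zero {k : ℤ} {a : R} (ha : HasDegree π k a) {i j : ℤ}
    (hij : j ≠ i + k) : π j * a * π i = 0 := by
  rw [mul_assoc, ha, ← mul_assoc, horth j _ hij, zero_mul]

lemma HasDegree.sum_mul_mul_sum_eq_zero {k : ℤ} {a : R} (ha : HasDegree π k a)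
    {s t : Finset ℤ} (hst : ∀ i ∈ s, ∀ j ∈ t, j ≠ i + k) :
    (∑ j ∈ t, π j) * a * ∑ i ∈ s, π i = 0 := by
  rw [sum_mul, sum_mul]
  exact sum_eq_zero fun j hj => (mul_sum _ _ _).trans <|
    sum_eq_zero fun i hi => ha.mul_mul_eq_zero horth (hst i hi j hj)

lemma HasDegree.evenPart_mul_mul_evenPart {k : ℤ} {a : R} (ha : HasDegree π k a) (hk : Odd k)
    (s : Finset ℤ) : evenPart π s * a * evenPart π s = 0 :=
  ha.sum_mul_mul_sum_eq_zero horth fun i hi j hj hij => by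
    simp only [mem_filter] at hi hj
    exact Int.not_even_iff_odd.mpr (hi.2.add_odd hk) (hij ▸ hj.2)

lemma HasDegree.oddPart_mul_mul_oddPart {k : ℤ} {a : R} (ha : HasDegree π k a) (hk : Odd k)
    (s : Finset ℤ) : oddPart π s * a * oddPart π s = 0 :=
  ha.sum_mul_mul_sum_eq_zero horth fun i hi j hj hij => by
    simp only [mem_filter] at hi hj
    exact Int.not_odd_iff_even.mpr (hi.2.add_odd hk) (hij ▸ hj.2)

lemma HasDegree.evenPart_mul_mul_oddPart {a : R} (ha : HasDegree π 0 a) (s : Finset ℤ) :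
    evenPart π s * a * oddPart π s = 0 :=
  ha.sum_mul_mul_sum_eq_zero horth fun i hi j hj hij => by
    simp only [mem_filter] at hi hj
    rw [add_zero] at hij
    exact Int.not_even_iff_odd.mpr hi.2 (hij ▸ hj.2)

end Ring

lemma prod_det_restrict_zpow_negOnePow {K V : Type*} [Field K] [AddCommGroup V] [Module K V]
    [FiniteDimensional K V] {π : ℤ → Module.End K V} (hidem : ∀ i, π i * π i = π i)
    (horth : ∀ i j, i ≠ j → π i * π j = 0) {Δ : Module.End K V} (hΔ : HasDegree π 0 Δ)
    (r : ∀ i, Module.End K (LinearMap.range (π i)))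
    (hr : ∀ i (x : LinearMap.range (π i)), (r i x : V) = Δ x) (s : Finset ℤ) :
    ∏ i ∈ s, LinearMap.det (r i) ^ (Int.negOnePow i : ℤ)
      = LinearMap.det (compress Δ (evenPart π s))
        * (LinearMap.det (compress Δ (oddPart π s)))⁻¹ := by
  have hπΔπ : ∀ i j, i ≠ j → π i * Δ * π j = 0 := fun i j hij =>
    hΔ.mul_mul_eq_zero horth (by rwa [add_zero])
  have hdet (t : Finset ℤ) :
      ∏ i ∈ t, LinearMap.det (r i) = LinearMap.det (compress Δ (∑ i ∈ t, π i)) := by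
    rw [map_compress_sum LinearMap.det Δ π horth hπΔπ]
    exact prod_congr rfl fun i _ =>
      LinearMap.det_restrict_eq_det_compress (hidem i) (r i) (hr i)
  have heven : ∀ i ∈ s.filter Even,
      LinearMap.det (r i) ^ (Int.negOnePow i : ℤ) = LinearMap.det (r i) :=
    fun i hi => by simp [Int.negOnePow_even i (mem_filter.1 hi).2]
  have hodd : ∀ i ∈ s.filter Odd,
      LinearMap.det (r i) ^ (Int.negOnePow i : ℤ) = (LinearMap.det (r i))⁻¹ :=
    fun i hi => by simp [Int.negOnePow_odd i (mem_filter.1 hi).2]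
  simp only [← Int.not_even_iff_odd] at hodd
  rw [← prod_filter_mul_prod_filter_not s Even, prod_congr rfl heven, prod_congr rfl hodd,
    prod_inv_distrib, hdet, hdet]
  simp only [evenPart, oddPart, Int.not_even_iff_odd]

end Graded

open Graded

theorem stmt6_general {V : Type} [AddCommGroup V] [Module ℂ V] [FiniteDimensional ℂ V]
    (p q : ℤ) (π : ℤ → Module.End ℂ V)
    (hidem : ∀ i, π i * π i = π i)
    (horth : ∀ i j, i ≠ j → π i * π j = 0)
    (hsum : ∑ i ∈ Finset.Icc p q, π i = 1)
    (d δ : Module.End ℂ V)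
    (hd : ∀ i, d * π i = π (i + 1) * d)
    (hδ : ∀ i, δ * π i = π (i - 1) * δ)
    (hdd : d * d = 0)
    (hδδ : δ * δ = 0)
    (hinv : IsUnit (d * δ + δ * d)) :
    ∀ r : ∀ i : ℤ, (LinearMap.range (π i) : Submodule ℂ V) →ₗ[ℂ]
        (LinearMap.range (π i) : Submodule ℂ V),
      (∀ (i : ℤ) (x : LinearMap.range (π i)), (r i x : V) = (d * δ + δ * d) (x : V)) →
      ∏ i ∈ Finset.Icc p q, LinearMap.det (r i) ^ (Int.negOnePow i : ℤ) = 1 := by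
  intro r hr
  have hd' : HasDegree π 1 d := hd
  have hδ' : HasDegree π (-1) δ := hδ
  have hΔ : HasDegree π 0 (d * δ + δ * d) := (hd'.mul hδ').add (hδ'.mul hd')
  rw [prod_det_restrict_zpow_negOnePow hidem horth hΔ r hr]
  set Δ := d * δ + δ * d
  set ε := evenPart π (Finset.Icc p q)
  set η := oddPart π (Finset.Icc p q)
  have hεη : ε + η = 1 := (evenPart_add_oddPart _).trans hsum
  have hNε : (d + δ) * ε = η * (d + δ) := mul_eq_mul_of_add_eq_one hεη
    (by rw [mul_add, add_mul, hd'.evenPart_mul_mul_evenPart horth odd_one,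
      hδ'.evenPart_mul_mul_evenPart horth (by decide), add_zero])
    (by rw [mul_add, add_mul, hd'.oddPart_mul_mul_oddPart horth odd_one,
      hδ'.oddPart_mul_mul_oddPart horth (by decide), add_zero])
  have hNsq : (d + δ) * (d + δ) = Δ := by
    rw [add_mul, mul_add, mul_add, hdd, hδδ, zero_add, add_zero]
  have hNΔ : (d + δ) * Δ = Δ * (d + δ) := by rw [← hNsq, mul_assoc]
  have hdet_eq : LinearMap.det (compress Δ ε) = LinearMap.det (compress Δ η) :=
    LinearMap.det.map_eq_of_mul_eq_mul (isUnit_of_mul_isUnit_left (hNsq ▸ hinv))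
      (mul_compress_eq_compress_mul hNΔ hNε)
  have hdet_mul :
      LinearMap.det (compress Δ ε) * LinearMap.det (compress Δ η) = LinearMap.det Δ := by
    have hεη0 : ε * η = 0 := by simpa using hasDegree_one.evenPart_mul_mul_oddPart horth _
    rw [← map_mul, compress_mul_compress hεη0 (hΔ.evenPart_mul_mul_oddPart horth _), hεη,
      compress_one]
  have hdet_ne : LinearMap.det (compress Δ η) ≠ 0 :=
    right_ne_zero_of_mul (hdet_mul ▸ (hinv.map LinearMap.det).ne_zero)
  rw [hdet_eq, mul_inv_cancel₀ hdet_ne]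

theorem stmt6 {V : Type} [AddCommGroup V] [Module ℂ V] [FiniteDimensional ℂ V]
    (p q : ℤ) (hpq : p ≤ q) (π : ℤ → Module.End ℂ V)
    (hidem : ∀ i, π i * π i = π i)
    (horth : ∀ i j, i ≠ j → π i * π j = 0)
    (hsupp : ∀ i, i ∉ Finset.Icc p q → π i = 0)
    (hsum : ∑ i ∈ Finset.Icc p q, π i = 1)
    (d δ : Module.End ℂ V)
    (hd : ∀ i, d * π i = π (i + 1) * d)
    (hδ : ∀ i, δ * π i = π (i - 1) * δ)
    (hdd : d * d = 0)
    (hδδ : δ * δ = 0)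
    (hinv : IsUnit (d * δ + δ * d)) :
    ∀ r : ∀ i : ℤ, (LinearMap.range (π i) : Submodule ℂ V) →ₗ[ℂ]
        (LinearMap.range (π i) : Submodule ℂ V),
      (∀ (i : ℤ) (x : LinearMap.range (π i)), (r i x : V) = (d * δ + δ * d) (x : V)) →
      ∏ i ∈ Finset.Icc p q, LinearMap.det (r i) ^ (Int.negOnePow i : ℤ) = 1 :=
  stmt6_general p q π hidem horth hsum d δ hd hδ hdd hδδ hinv
end

section
/- Let d be a differential of degree 1 and δ a differential of degree −1 on E such that [d,δ] = d∘δ + δ∘d is invertible. Then for each i the endomorphism d∘δ preserves the subspace d(E^{i−1}) ⊆ E^i and is invertible on it, and ∏_{i=p}^{q} det([d,δ]|_{E^i})^{(−1)^i · i} = ∏_{i=p+1}^{q} det((d∘δ)|_{d(E^{i−1})})^{(−1)^i}. (Identity (2.64) in the proof of Theorem 2.8.) -/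
open LinearMap Submodule

section Helpers

variable {K W : Type*} [Field K] [AddCommGroup W] [Module K W] [FiniteDimensional K W]

lemma myDetProdMap {M N : Type*} [AddCommGroup M] [Module K M]
    [AddCommGroup N] [Module K N] [FiniteDimensional K M] [FiniteDimensional K N]
    (f : Module.End K M) (g : Module.End K N) :
    LinearMap.det (f.prodMap g) = LinearMap.det f * LinearMap.det g := by
  classical
  let bM := Module.Free.chooseBasis K M
  let bN := Module.Free.chooseBasis K N
  rw [← LinearMap.det_toMatrix (bM.prod bN), LinearMap.toMatrix_prodMap,
    Matrix.det_fromBlocks_zero₂₁, LinearMap.det_toMatrix, LinearMap.det_toMatrix]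

lemma myDetConj {M N : Type*} [AddCommGroup M] [Module K M]
    [AddCommGroup N] [Module K N]
    (f : Module.End K M) (e : M ≃ₗ[K] N) :
    LinearMap.det (e.conj f) = LinearMap.det f := by
  rw [LinearEquiv.conj_apply, LinearMap.comp_assoc, LinearMap.det_conj]

lemma myDetRestrictCompl (f : Module.End K W) {A B : Submodule K W}
    (hAB : IsCompl A B) (hA : ∀ x ∈ A, f x ∈ A) (hB : ∀ x ∈ B, f x ∈ B) :
    LinearMap.det f = LinearMap.det (f.restrict hA) * LinearMap.det (f.restrict hB) := by
  let e := Submodule.prodEquivOfIsCompl A B hAB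
  have hy : ∀ (y : A × B), e (((f.restrict hA).prodMap (f.restrict hB)) y) = f (e y) := by
    intro y
    simp [e, Submodule.coe_prodEquivOfIsCompl', LinearMap.prodMap_apply,
      LinearMap.restrict_coe_apply, map_add]
  have key : e.conj ((f.restrict hA).prodMap (f.restrict hB)) = f := by
    apply LinearMap.ext
    intro x
    rw [LinearEquiv.conj_apply_apply, hy, e.apply_symm_apply]
  rw [← myDetProdMap, ← myDetConj ((f.restrict hA).prodMap (f.restrict hB)) e, key]

lemma myRestrictBij (Δ : Module.End K W) (hΔ : Function.Injective Δ)
    {F : Submodule K W} (hF : ∀ x ∈ F, Δ x ∈ F) :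
    Function.Bijective (Δ.restrict hF) := by
  have hinj : Function.Injective (Δ.restrict hF) := by
    intro x y hxy
    apply Subtype.ext
    apply hΔ
    have := congrArg (Subtype.val) hxy
    simpa [LinearMap.restrict_coe_apply] using this
  exact ⟨hinj, LinearMap.injective_iff_surjective.mp hinj⟩

lemma myDetSplit (Δ : Module.End K W) {E F G : Submodule K W}
    (hFE : F ≤ E) (hGE : G ≤ E)
    (hF : ∀ x ∈ F, Δ x ∈ F) (hG : ∀ x ∈ G, Δ x ∈ G)
    (hdisj : ∀ x, x ∈ F → x ∈ G → x = 0)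
    (hsup : ∀ x ∈ E, x ∈ F ⊔ G)
    (r : Module.End K E) (hr : ∀ x : E, (r x : W) = Δ (x : W)) :
    LinearMap.det r = LinearMap.det (Δ.restrict hF) * LinearMap.det (Δ.restrict hG) := by
  set A : Submodule K E := Submodule.comap E.subtype F with hAdef
  set B : Submodule K E := Submodule.comap E.subtype G with hBdef
  have hmemA : ∀ x : E, x ∈ A ↔ (x : W) ∈ F := fun x => Iff.rfl
  have hmemB : ∀ x : E, x ∈ B ↔ (x : W) ∈ G := fun x => Iff.rfl
  have hAB : IsCompl A B := by
    constructor
    · rw [disjoint_iff]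
      apply (Submodule.eq_bot_iff _).mpr
      intro x hx
      exact Subtype.ext (hdisj (x : W) hx.1 hx.2)
    · rw [codisjoint_iff]
      apply Submodule.eq_top_iff'.mpr
      intro x
      obtain ⟨y, hy, z, hz, hyz⟩ := Submodule.mem_sup.mp (hsup (x : W) x.2)
      have hx : x = (⟨y, hFE hy⟩ : E) + ⟨z, hGE hz⟩ := Subtype.ext (by simp [hyz.symm])
      rw [hx]
      exact Submodule.add_mem_sup (show (⟨y, hFE hy⟩ : E) ∈ A from hy)
        (show (⟨z, hGE hz⟩ : E) ∈ B from hz)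
  have hA : ∀ x ∈ A, r x ∈ A := by
    intro x hx
    rw [hmemA, hr]
    exact hF _ hx
  have hB : ∀ x ∈ B, r x ∈ B := by
    intro x hx
    rw [hmemB, hr]
    exact hG _ hx
  rw [myDetRestrictCompl r hAB hA hB]
  have hFeq : Δ.restrict hF = (Submodule.comapSubtypeEquivOfLe hFE).conj (r.restrict hA) := by
    apply LinearMap.ext
    intro x
    apply Subtype.ext
    rw [LinearEquiv.conj_apply_apply, LinearMap.restrict_coe_apply,
      Submodule.comapSubtypeEquivOfLe_apply_coe, LinearMap.restrict_coe_apply, hr,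
      ← Submodule.comapSubtypeEquivOfLe_apply_coe hFE ((Submodule.comapSubtypeEquivOfLe hFE).symm x),
      LinearEquiv.apply_symm_apply]
  have hGeq : Δ.restrict hG = (Submodule.comapSubtypeEquivOfLe hGE).conj (r.restrict hB) := by
    apply LinearMap.ext
    intro x
    apply Subtype.ext
    rw [LinearEquiv.conj_apply_apply, LinearMap.restrict_coe_apply,
      Submodule.comapSubtypeEquivOfLe_apply_coe, LinearMap.restrict_coe_apply, hr,
      ← Submodule.comapSubtypeEquivOfLe_apply_coe hGE ((Submodule.comapSubtypeEquivOfLe hGE).symm x),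
      LinearEquiv.apply_symm_apply]
  rw [hFeq, hGeq, myDetConj, myDetConj]

lemma myDetTransfer (Δ T : Module.End K W) {G F : Submodule K W}
    (hG : ∀ x ∈ G, Δ x ∈ G) (hF : ∀ x ∈ F, Δ x ∈ F)
    (hT : ∀ x ∈ G, T x ∈ F)
    (hTinj : ∀ x ∈ G, T x = 0 → x = 0)
    (hTsurj : ∀ y ∈ F, ∃ x ∈ G, T x = y)
    (hcomm : ∀ x ∈ G, Δ (T x) = T (Δ x)) :
    LinearMap.det (Δ.restrict hG) = LinearMap.det (Δ.restrict hF) := by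
  have hbij : Function.Bijective (T.restrict hT) := by
    constructor
    · intro x y hxy
      apply Subtype.ext
      have h0 : T ((x : W) - y) = 0 := by
        have := congrArg Subtype.val hxy
        rw [LinearMap.restrict_coe_apply, LinearMap.restrict_coe_apply] at this
        rw [map_sub, this, sub_self]
      have := hTinj ((x : W) - (y : W)) (G.sub_mem x.2 y.2) h0
      exact sub_eq_zero.mp this
    · intro y
      obtain ⟨x, hx, hxy⟩ := hTsurj (y : W) y.2
      exact ⟨⟨x, hx⟩, Subtype.ext (by rw [LinearMap.restrict_coe_apply]; exact hxy)⟩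
  let e : G ≃ₗ[K] F := LinearEquiv.ofBijective (T.restrict hT) hbij
  have hkey : Δ.restrict hF = e.conj (Δ.restrict hG) := by
    apply LinearMap.ext
    intro y
    apply Subtype.ext
    have hcoe : ∀ z : G, (e z : W) = T (z : W) := fun z => rfl
    have h1 : ((e ((Δ.restrict hG) (e.symm y))) : W) = T ((((Δ.restrict hG) (e.symm y)) : G) : W) :=
      hcoe _
    have h2 : ((((Δ.restrict hG) (e.symm y)) : G) : W) = Δ ((e.symm y : G) : W) :=
      LinearMap.restrict_coe_apply _ _ _
    have h3 : (T ((e.symm y : G) : W)) = (y : W) := by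
      rw [← hcoe, e.apply_symm_apply]
    rw [LinearEquiv.conj_apply_apply, h1, h2, ← hcomm _ (e.symm y).2, h3]
    exact LinearMap.restrict_coe_apply _ _ _
  rw [hkey, myDetConj]

lemma myIccInsert (p q : ℤ) (h : p ≤ q + 1) :
    Finset.Icc p (q + 1) = insert (q + 1) (Finset.Icc p q) := by
  ext x
  simp only [Finset.mem_Icc, Finset.mem_insert]
  omega

lemma myTele (a : ℤ → ℂ) (ha : ∀ i, a i ≠ 0) (p : ℤ) :
    ∀ q, p ≤ q →
    ∏ i ∈ Finset.Icc p q, (a i * a (i + 1)) ^ ((Int.negOnePow i : ℤ) * i)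
      = a p ^ ((Int.negOnePow p : ℤ) * p) * a (q + 1) ^ ((Int.negOnePow q : ℤ) * q)
        * ∏ i ∈ Finset.Icc (p + 1) q, a i ^ (Int.negOnePow i : ℤ) := by
  refine Int.le_induction ?_ ?_
  · rw [Finset.Icc_self, Finset.prod_singleton, Finset.Icc_eq_empty (by omega),
      Finset.prod_empty, mul_one, mul_zpow]
  · intro q hq ih
    rw [myIccInsert p q (by omega), Finset.prod_insert (by simp), ih,
      myIccInsert (p + 1) q (by omega), Finset.prod_insert (by simp)]
    have h1 : ((Int.negOnePow (q + 1) : ℤ)) = -(Int.negOnePow q : ℤ) := by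
      simp [Int.negOnePow_succ]
    rw [mul_zpow, h1]
    have hx := ha (q + 1)
    have this1 : a (q + 1) ^ (-(Int.negOnePow q : ℤ) * (q + 1)) * a (q + 1) ^ ((Int.negOnePow q : ℤ) * q)
        = a (q + 1) ^ (-(Int.negOnePow q : ℤ)) := by
      rw [← zpow_add₀ hx]
      ring_nf
    have hq2 : q + 1 + 1 = q + 2 := by ring
    rw [hq2]
    calc a (q + 1) ^ (-(Int.negOnePow q : ℤ) * (q + 1)) * a (q + 2) ^ (-(Int.negOnePow q : ℤ) * (q + 1)) *
      (a p ^ ((Int.negOnePow p : ℤ) * p) * a (q + 1) ^ ((Int.negOnePow q : ℤ) * q) *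
        ∏ i ∈ Finset.Icc (p + 1) q, a i ^ (Int.negOnePow i : ℤ))
        = a p ^ ((Int.negOnePow p : ℤ) * p) * a (q + 2) ^ (-(Int.negOnePow q : ℤ) * (q + 1)) *
          ((a (q + 1) ^ (-(Int.negOnePow q : ℤ) * (q + 1)) * a (q + 1) ^ ((Int.negOnePow q : ℤ) * q)) *
            ∏ i ∈ Finset.Icc (p + 1) q, a i ^ (Int.negOnePow i : ℤ)) := by ring
      _ = a p ^ ((Int.negOnePow p : ℤ) * p) * a (q + 2) ^ (-(Int.negOnePow q : ℤ) * (q + 1)) *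
          (a (q + 1) ^ (-(Int.negOnePow q : ℤ)) *
            ∏ i ∈ Finset.Icc (p + 1) q, a i ^ (Int.negOnePow i : ℤ)) := by rw [this1]
      _ = _ := by ring

end Helpers

/- STATEMENT 7: If `[d,δ] = d∘δ + δ∘d` is invertible, then for each `i` the endomorphism
`d∘δ` preserves `d(E^{i-1}) ⊆ E^i` and is invertible on it, and
`∏_{i=p}^{q} det([d,δ]|_{E^i})^{(-1)^i · i}
  = ∏_{i=p+1}^{q} det((d∘δ)|_{d(E^{i-1})})^{(-1)^i}`.

`E` is modelled as a finite-dimensional complex vector space `V` together with a family of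
projections `π i` (idempotent, mutually orthogonal, supported in `[p, q]`, summing to `1`),
whose ranges are the graded pieces `E^i`.  An endomorphism `a` has degree `k` iff
`a * π i = π (i + k) * a` for all `i`.  Restrictions are encoded as endomorphisms of the
corresponding submodules agreeing with the given operators. -/
theorem stmt7 {V : Type} [AddCommGroup V] [Module ℂ V] [FiniteDimensional ℂ V]
    (p q : ℤ) (hpq : p ≤ q) (π : ℤ → Module.End ℂ V)
    (hidem : ∀ i, π i * π i = π i)
    (horth : ∀ i j, i ≠ j → π i * π j = 0)
    (hsupp : ∀ i, i ∉ Finset.Icc p q → π i = 0)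
    (hsum : ∑ i ∈ Finset.Icc p q, π i = 1)
    (d δ : Module.End ℂ V)
    (hd : ∀ i, d * π i = π (i + 1) * d)
    (hδ : ∀ i, δ * π i = π (i - 1) * δ)
    (hdd : d * d = 0)
    (hδδ : δ * δ = 0)
    (hinv : IsUnit (d * δ + δ * d)) :
    (∀ i : ℤ, Submodule.map (d : V →ₗ[ℂ] V) (LinearMap.range (π (i - 1)))
        ≤ LinearMap.range (π i)) ∧
    (∀ i : ℤ, ∀ x ∈ Submodule.map (d : V →ₗ[ℂ] V) (LinearMap.range (π (i - 1))),
        (d * δ) x ∈ Submodule.map (d : V →ₗ[ℂ] V) (LinearMap.range (π (i - 1)))) ∧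
    ∀ (r : ∀ i : ℤ, (LinearMap.range (π i) : Submodule ℂ V) →ₗ[ℂ]
        (LinearMap.range (π i) : Submodule ℂ V))
      (s : ∀ i : ℤ,
        (Submodule.map (d : V →ₗ[ℂ] V) (LinearMap.range (π (i - 1)))) →ₗ[ℂ]
        (Submodule.map (d : V →ₗ[ℂ] V) (LinearMap.range (π (i - 1))))),
      (∀ (i : ℤ) (x : LinearMap.range (π i)), (r i x : V) = (d * δ + δ * d) (x : V)) →
      (∀ (i : ℤ) (x : Submodule.map (d : V →ₗ[ℂ] V) (LinearMap.range (π (i - 1)))),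
        (s i x : V) = (d * δ) (x : V)) →
      (∀ i : ℤ, Function.Bijective (s i)) ∧
      ∏ i ∈ Finset.Icc p q, LinearMap.det (r i) ^ ((Int.negOnePow i : ℤ) * i)
        = ∏ i ∈ Finset.Icc (p + 1) q, LinearMap.det (s i) ^ (Int.negOnePow i : ℤ) := by
  classical
  -- the Laplacian commutes with `d`, `δ` and the projections
  have hΔd : (d * δ + δ * d) * d = d * (d * δ + δ * d) := by
    rw [add_mul, mul_add, mul_assoc δ d d, hdd, mul_assoc d δ d, ← mul_assoc d d δ, hdd]
    simp [mul_assoc]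
  have hΔδ : (d * δ + δ * d) * δ = δ * (d * δ + δ * d) := by
    rw [add_mul, mul_add, mul_assoc d δ δ, hδδ, mul_assoc δ d δ, ← mul_assoc δ δ d, hδδ]
    simp [mul_assoc]
  have hΔπ : ∀ i, (d * δ + δ * d) * π i = π i * (d * δ + δ * d) := by
    intro i
    have h1 : d * δ * π i = π i * (d * δ) := by
      calc d * δ * π i = d * (π (i - 1) * δ) := by rw [mul_assoc, hδ]
        _ = (d * π (i - 1)) * δ := by rw [mul_assoc]
        _ = π (i - 1 + 1) * d * δ := by rw [hd]
        _ = π i * (d * δ) := by rw [show i - 1 + 1 = i by ring, mul_assoc]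
    have h2 : δ * d * π i = π i * (δ * d) := by
      calc δ * d * π i = δ * (π (i + 1) * d) := by rw [mul_assoc, hd]
        _ = (δ * π (i + 1)) * d := by rw [mul_assoc]
        _ = π (i + 1 - 1) * δ * d := by rw [hδ]
        _ = π i * (δ * d) := by rw [show i + 1 - 1 = i by ring, mul_assoc]
    rw [add_mul, mul_add, h1, h2]
  obtain ⟨u, hu⟩ := hinv
  have hΔbij : Function.Bijective ⇑(d * δ + δ * d) := by
    rw [← hu]
    exact (Module.End.isUnit_iff _).mp u.isUnit
  have hΔinj : Function.Injective ⇑(d * δ + δ * d) := hΔbij.1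
  have hΘπ : ∀ i, (↑u⁻¹ : Module.End ℂ V) * π i = π i * ↑u⁻¹ := by
    intro i
    have hc : Commute (↑u : Module.End ℂ V) (π i) := by
      rw [hu]; exact hΔπ i
    exact (hc.units_inv_left).eq
  -- membership facts
  have hdmem : ∀ (i : ℤ) (x : V), x ∈ LinearMap.range (π i) →
      d x ∈ LinearMap.range (π (i + 1)) := by
    rintro i x ⟨y, rfl⟩
    exact ⟨d y, (DFunLike.congr_fun (hd i) y).symm⟩
  have hδmem : ∀ (i : ℤ) (x : V), x ∈ LinearMap.range (π i) →
      δ x ∈ LinearMap.range (π (i - 1)) := by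
    rintro i x ⟨y, rfl⟩
    exact ⟨δ y, (DFunLike.congr_fun (hδ i) y).symm⟩
  have hΔmem : ∀ (i : ℤ) (x : V), x ∈ LinearMap.range (π i) →
      (d * δ + δ * d) x ∈ LinearMap.range (π i) := by
    rintro i x ⟨y, rfl⟩
    exact ⟨(d * δ + δ * d) y, (DFunLike.congr_fun (hΔπ i) y).symm⟩
  have hΘmem : ∀ (i : ℤ) (x : V), x ∈ LinearMap.range (π i) →
      (↑u⁻¹ : Module.End ℂ V) x ∈ LinearMap.range (π i) := by
    rintro i x ⟨y, rfl⟩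
    exact ⟨(↑u⁻¹ : Module.End ℂ V) y, (DFunLike.congr_fun (hΘπ i) y).symm⟩
  have hd0 : ∀ x : V, d (d x) = 0 := by
    intro x
    have := DFunLike.congr_fun hdd x
    simpa using this
  have hδ0 : ∀ x : V, δ (δ x) = 0 := by
    intro x
    have := DFunLike.congr_fun hδδ x
    simpa using this
  have hΔapply : ∀ x : V, (d * δ + δ * d) x = d (δ x) + δ (d x) := fun x => rfl
  have hΘinv : ∀ x : V, (d * δ + δ * d) ((↑u⁻¹ : Module.End ℂ V) x) = x := by
    intro x
    have h1 : (d * δ + δ * d) * (↑u⁻¹ : Module.End ℂ V) = 1 := by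
      rw [← hu]; exact u.mul_inv
    calc (d * δ + δ * d) ((↑u⁻¹ : Module.End ℂ V) x)
        = ((d * δ + δ * d) * (↑u⁻¹ : Module.End ℂ V)) x := rfl
      _ = (1 : Module.End ℂ V) x := by rw [h1]
      _ = x := rfl
  -- Part 1
  have part1 : ∀ i : ℤ, Submodule.map (d : V →ₗ[ℂ] V) (LinearMap.range (π (i - 1)))
      ≤ LinearMap.range (π i) := by
    rintro i x ⟨y, hy, rfl⟩
    have := hdmem (i - 1) y hy
    rwa [show i - 1 + 1 = i by ring] at this
  -- Part 2
  have part2 : ∀ i : ℤ, ∀ x ∈ Submodule.map (d : V →ₗ[ℂ] V) (LinearMap.range (π (i - 1))),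
      (d * δ) x ∈ Submodule.map (d : V →ₗ[ℂ] V) (LinearMap.range (π (i - 1))) := by
    rintro i x ⟨y, hy, rfl⟩
    refine ⟨δ (d y), ?_, rfl⟩
    have h1 := hdmem (i - 1) y hy
    have h2 := hδmem (i - 1 + 1) _ h1
    rwa [show i - 1 + 1 - 1 = i - 1 by ring] at h2
  -- Δ-invariance of F i and G i
  have hΔF : ∀ i : ℤ, ∀ x ∈ Submodule.map (d : V →ₗ[ℂ] V) (LinearMap.range (π (i - 1))),
      (d * δ + δ * d) x ∈ Submodule.map (d : V →ₗ[ℂ] V) (LinearMap.range (π (i - 1))) := by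
    rintro i x ⟨y, hy, rfl⟩
    exact ⟨(d * δ + δ * d) y, hΔmem (i - 1) y hy, (DFunLike.congr_fun hΔd y).symm⟩
  have hΔG : ∀ i : ℤ, ∀ x ∈ Submodule.map (δ : V →ₗ[ℂ] V) (LinearMap.range (π (i + 1))),
      (d * δ + δ * d) x ∈ Submodule.map (δ : V →ₗ[ℂ] V) (LinearMap.range (π (i + 1))) := by
    rintro i x ⟨y, hy, rfl⟩
    exact ⟨(d * δ + δ * d) y, hΔmem (i + 1) y hy, (DFunLike.congr_fun hΔδ y).symm⟩
  have hGle : ∀ i : ℤ, Submodule.map (δ : V →ₗ[ℂ] V) (LinearMap.range (π (i + 1)))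
      ≤ LinearMap.range (π i) := by
    rintro i x ⟨y, hy, rfl⟩
    have := hδmem (i + 1) y hy
    rwa [show i + 1 - 1 = i by ring] at this
  have hdisj : ∀ i : ℤ, ∀ x : V,
      x ∈ Submodule.map (d : V →ₗ[ℂ] V) (LinearMap.range (π (i - 1))) →
      x ∈ Submodule.map (δ : V →ₗ[ℂ] V) (LinearMap.range (π (i + 1))) → x = 0 := by
    rintro i x ⟨y, hy, rfl⟩ hG
    obtain ⟨z, hz, hzx⟩ := hG
    have h1 : d (d y) = 0 := hd0 y
    have h2 : δ (d y) = 0 := by rw [← hzx]; exact hδ0 z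
    have h3 : (d * δ + δ * d) (d y) = 0 := by
      rw [hΔapply, h1, h2]
      simp
    exact hΔinj (by simp [h3])
  have hsup : ∀ i : ℤ, ∀ x ∈ LinearMap.range (π i),
      x ∈ Submodule.map (d : V →ₗ[ℂ] V) (LinearMap.range (π (i - 1)))
        ⊔ Submodule.map (δ : V →ₗ[ℂ] V) (LinearMap.range (π (i + 1))) := by
    intro i x hx
    have hwE : (↑u⁻¹ : Module.End ℂ V) x ∈ LinearMap.range (π i) := hΘmem i x hx
    have hmem1 : d (δ ((↑u⁻¹ : Module.End ℂ V) x))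
        ∈ Submodule.map (d : V →ₗ[ℂ] V) (LinearMap.range (π (i - 1))) :=
      ⟨δ ((↑u⁻¹ : Module.End ℂ V) x), hδmem i _ hwE, rfl⟩
    have hmem2 : δ (d ((↑u⁻¹ : Module.End ℂ V) x))
        ∈ Submodule.map (δ : V →ₗ[ℂ] V) (LinearMap.range (π (i + 1))) :=
      ⟨d ((↑u⁻¹ : Module.End ℂ V) x), hdmem i _ hwE, rfl⟩
    have hxeq : x = d (δ ((↑u⁻¹ : Module.End ℂ V) x)) + δ (d ((↑u⁻¹ : Module.End ℂ V) x)) := by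
      rw [← hΔapply, hΘinv]
    rw [hxeq]
    exact Submodule.add_mem_sup hmem1 hmem2
  refine ⟨part1, part2, ?_⟩
  intro r s hr hs
  -- `s i` agrees with the restriction of the Laplacian
  have hsΔ : ∀ (i : ℤ) (x : Submodule.map (d : V →ₗ[ℂ] V) (LinearMap.range (π (i - 1)))),
      (s i x : V) = (d * δ + δ * d) (x : V) := by
    intro i x
    rw [hs i x]
    obtain ⟨y, hy, hyx⟩ := x.2
    have hdx : d (x : V) = 0 := by rw [← hyx]; exact hd0 y
    rw [hΔapply, hdx, map_zero, add_zero]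
    rfl
  have hsrestrict : ∀ i : ℤ, s i = LinearMap.restrict (d * δ + δ * d) (hΔF i) := by
    intro i
    apply LinearMap.ext
    intro x
    apply Subtype.ext
    rw [hsΔ i x, LinearMap.restrict_coe_apply]
  have hbijs : ∀ i : ℤ, Function.Bijective (s i) := by
    intro i
    rw [hsrestrict i]
    exact myRestrictBij _ hΔinj (hΔF i)
  refine ⟨hbijs, ?_⟩
  -- determinant bookkeeping
  set a : ℤ → ℂ := fun i =>
    LinearMap.det (LinearMap.restrict (d * δ + δ * d) (hΔF i)) with ha_def
  have ha_ne : ∀ i, a i ≠ 0 := by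
    intro i
    have hbij := myRestrictBij (d * δ + δ * d) hΔinj (hΔF i)
    have hunit : IsUnit (LinearMap.restrict (d * δ + δ * d) (hΔF i)) :=
      (Module.End.isUnit_iff _).mpr hbij
    exact (LinearMap.isUnit_det _ hunit).ne_zero
  have ha_p : a p = 1 := by
    have h0 : π (p - 1) = 0 := hsupp (p - 1) (by simp only [Finset.mem_Icc]; omega)
    have hFp : Submodule.map (d : V →ₗ[ℂ] V) (LinearMap.range (π (p - 1))) = ⊥ := by
      rw [h0]
      simp
    haveI : Subsingleton (Submodule.map (d : V →ₗ[ℂ] V) (LinearMap.range (π (p - 1)))) := by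
      rw [hFp]
      infer_instance
    exact LinearMap.det_eq_one_of_subsingleton _
  have ha_q : a (q + 1) = 1 := by
    have h0 : π (q + 1) = 0 := hsupp (q + 1) (by simp only [Finset.mem_Icc]; omega)
    have hFq : Submodule.map (d : V →ₗ[ℂ] V) (LinearMap.range (π (q + 1 - 1))) = ⊥ := by
      apply le_bot_iff.mp
      intro x hx
      have := part1 (q + 1) hx
      rw [h0] at this
      simpa using this
    haveI : Subsingleton (Submodule.map (d : V →ₗ[ℂ] V) (LinearMap.range (π (q + 1 - 1)))) := by
      rw [hFq]
      infer_instance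
    exact LinearMap.det_eq_one_of_subsingleton _
  have hdet_G : ∀ i : ℤ,
      LinearMap.det (LinearMap.restrict (d * δ + δ * d) (hΔG i)) = a (i + 1) := by
    intro i
    apply myDetTransfer (d * δ + δ * d) d (hΔG i) (hΔF (i + 1))
    · rintro x ⟨y, hy, rfl⟩
      exact ⟨δ y, hδmem (i + 1) y hy, rfl⟩
    · rintro x ⟨y, hy, rfl⟩ h0
      have h2 : δ (δ y) = 0 := hδ0 y
      have h3 : (d * δ + δ * d) (δ y) = 0 := by
        rw [hΔapply, h2, h0]
        simp
      exact hΔinj (by simp [h3])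
    · rintro z ⟨y, hy, rfl⟩
      have hy' : y ∈ LinearMap.range (π i) := by
        rwa [show i + 1 - 1 = i by ring] at hy
      have hwE : (↑u⁻¹ : Module.End ℂ V) y ∈ LinearMap.range (π i) := hΘmem i y hy'
      refine ⟨δ (d ((↑u⁻¹ : Module.End ℂ V) y)), ⟨d ((↑u⁻¹ : Module.End ℂ V) y),
        hdmem i _ hwE, rfl⟩, ?_⟩
      have hcg := DFunLike.congr_fun hΔd ((↑u⁻¹ : Module.End ℂ V) y)
      calc d (δ (d ((↑u⁻¹ : Module.End ℂ V) y)))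
          = d (δ (d ((↑u⁻¹ : Module.End ℂ V) y))) + δ (d (d ((↑u⁻¹ : Module.End ℂ V) y))) := by
            rw [hd0, map_zero, add_zero]
        _ = (d * δ + δ * d) (d ((↑u⁻¹ : Module.End ℂ V) y)) := (hΔapply _).symm
        _ = d ((d * δ + δ * d) ((↑u⁻¹ : Module.End ℂ V) y)) := hcg
        _ = d y := by rw [hΘinv]
    · intro x _
      exact DFunLike.congr_fun hΔd x
  have hdet_r : ∀ i ∈ Finset.Icc p q, LinearMap.det (r i) = a i * a (i + 1) := by
    intro i _
    rw [myDetSplit (d * δ + δ * d) (part1 i) (hGle i) (hΔF i) (hΔG i) (hdisj i) (hsup i)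
      (r i) (hr i), hdet_G i]
  have hdet_s : ∀ i : ℤ, LinearMap.det (s i) = a i := by
    intro i
    rw [hsrestrict i]
  calc ∏ i ∈ Finset.Icc p q, LinearMap.det (r i) ^ ((Int.negOnePow i : ℤ) * i)
      = ∏ i ∈ Finset.Icc p q, (a i * a (i + 1)) ^ ((Int.negOnePow i : ℤ) * i) :=
        Finset.prod_congr rfl (fun i hi => by rw [hdet_r i hi])
    _ = a p ^ ((Int.negOnePow p : ℤ) * p) * a (q + 1) ^ ((Int.negOnePow q : ℤ) * q)
        * ∏ i ∈ Finset.Icc (p + 1) q, a i ^ (Int.negOnePow i : ℤ) := myTele a ha_ne p q hpq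
    _ = ∏ i ∈ Finset.Icc (p + 1) q, a i ^ (Int.negOnePow i : ℤ) := by
        rw [ha_p, ha_q, one_zpow, one_zpow, one_mul, one_mul]
    _ = ∏ i ∈ Finset.Icc (p + 1) q, LinearMap.det (s i) ^ (Int.negOnePow i : ℤ) :=
        Finset.prod_congr rfl (fun i _ => by rw [hdet_s i])
end

section
/- Let d be a differential of degree 1 on E and δ an exact differential of degree −1 on E. Set H = d∘δ + δ∘d, and let a > 0 be such that no eigenvalue λ of H satisfies |λ| = a. Let E_{<a} be the sum of the generalized eigenspaces of H for eigenvalues λ with |λ| < a. Then δ maps E_{<a} into itself, and the restriction of δ to E_{<a} is exact: for every x ∈ E_{<a} with δx = 0 there exists y ∈ E_{<a} with δy = x. (Proposition 2.12.) -/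
/-!
Since `δ² = 0`, `δ` commutes with `H = dδ + δd`, so it preserves every generalized eigenspace of
`H`, hence both `E_{<a}` and the sum `E'` of the remaining generalized eigenspaces. As `H` is
triangularizable, `E = E_{<a} ⊕ E'`. If `x ∈ E_{<a}` and `δx = 0`, write `x = δy` and split
`y = y₁ + y₂` along this decomposition: then `x - δy₁ = δy₂` lies in `E_{<a} ∩ E' = 0`.
-/

noncomputable def genEigLt {V : Type} [AddCommGroup V] [Module ℂ V]
    (H : Module.End ℂ V) (a : ℝ) : Submodule ℂ V :=
  ⨆ (μ : ℂ) (_ : ‖μ‖ < a), ⨆ k : ℕ,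
    LinearMap.ker ((H - μ • (1 : Module.End ℂ V)) ^ k)

open Module End

theorem commute_add_mul_of_mul_self_eq_zero {R : Type*} [NonUnitalSemiring R] (d : R) {δ : R}
    (hδ : δ * δ = 0) : Commute (d * δ + δ * d) δ := by
  calc (d * δ + δ * d) * δ = δ * d * δ := by rw [add_mul, mul_assoc d, hδ, mul_zero, zero_add]
    _ = δ * (d * δ + δ * d) := by rw [mul_add, ← mul_assoc δ δ, hδ, zero_mul, add_zero, mul_assoc]

theorem Module.End.iSup_ker_pow_sub_smul_one {R M : Type*} [CommRing R] [AddCommGroup M]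
    [Module R M] (f : End R M) (μ : R) :
    ⨆ k : ℕ, LinearMap.ker ((f - μ • (1 : End R M)) ^ k) = f.maxGenEigenspace μ := by
  simp_rw [← genEigenspace_nat, iSup_genEigenspace_eq]

theorem Module.End.mapsTo_biSup_maxGenEigenspace_of_comm {R M : Type*} [CommRing R]
    [AddCommGroup M] [Module R M] {f g : End R M} (h : Commute f g) (P : R → Prop) :
    Set.MapsTo g ↑(⨆ (μ) (_ : P μ), f.maxGenEigenspace μ)
      ↑(⨆ (μ) (_ : P μ), f.maxGenEigenspace μ) := by
  have : (⨆ (μ) (_ : P μ), f.maxGenEigenspace μ) ≤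
      (⨆ (μ) (_ : P μ), f.maxGenEigenspace μ).comap g :=
    iSup₂_le fun μ hμ _ hx ↦ Submodule.mem_iSup_of_mem μ <| Submodule.mem_iSup_of_mem hμ <|
      mapsTo_maxGenEigenspace_of_comm h μ hx
  exact fun _ hx ↦ this hx

theorem Module.End.isCompl_biSup_maxGenEigenspace {K V : Type*} [Field K] [IsAlgClosed K]
    [AddCommGroup V] [Module K V] [FiniteDimensional K V] (f : End K V) (P : K → Prop) :
    IsCompl (⨆ (μ) (_ : P μ), f.maxGenEigenspace μ)
      (⨆ (μ) (_ : ¬P μ), f.maxGenEigenspace μ) where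
  disjoint := (independent_maxGenEigenspace f).disjoint_biSup_biSup (s := {μ | P μ})
    (t := {μ | ¬P μ}) (Set.disjoint_left.2 fun _ hP hnP ↦ hnP hP)
  codisjoint := by
    rw [codisjoint_iff, ← iSup_split, iSup_maxGenEigenspace_eq_top]

theorem LinearMap.exists_mem_apply_eq_of_isCompl {R M : Type*} [Ring R] [AddCommGroup M]
    [Module R M] {δ : M →ₗ[R] M} (hδ : ker δ ≤ range δ) {A B : Submodule R M}
    (hAB : IsCompl A B) (hA : Set.MapsTo δ A A) (hB : Set.MapsTo δ B B) {x : M} (hx : x ∈ A)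
    (hδx : δ x = 0) : ∃ y ∈ A, δ y = x := by
  obtain ⟨y, rfl⟩ := hδ hδx
  have hy : y ∈ A ⊔ B := hAB.sup_eq_top ▸ Submodule.mem_top
  obtain ⟨y₁, hy₁, y₂, hy₂, rfl⟩ := Submodule.mem_sup.1 hy
  refine ⟨y₁, hy₁, ?_⟩
  have hδy₂ : δ y₂ ∈ A := by simpa using A.sub_mem hx (hA hy₁)
  have hδy₂_zero : δ y₂ = 0 := (Submodule.disjoint_def.1 hAB.disjoint) _ hδy₂ (hB hy₂)
  simp [hδy₂_zero]

theorem stmt10_general {V : Type} [AddCommGroup V] [Module ℂ V] [FiniteDimensional ℂ V]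
    (d δ : Module.End ℂ V)
    (hδδ : δ * δ = 0)
    (hδexact : LinearMap.ker δ = LinearMap.range δ)
    (a : ℝ) :
    (∀ x ∈ genEigLt (d * δ + δ * d) a, δ x ∈ genEigLt (d * δ + δ * d) a) ∧
    (∀ x ∈ genEigLt (d * δ + δ * d) a, δ x = 0 →
      ∃ y ∈ genEigLt (d * δ + δ * d) a, δ y = x) := by
  have hcomm := commute_add_mul_of_mul_self_eq_zero d hδδ
  simp_rw [genEigLt, iSup_ker_pow_sub_smul_one]
  exact ⟨mapsTo_biSup_maxGenEigenspace_of_comm hcomm _,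
    fun _ ↦ LinearMap.exists_mem_apply_eq_of_isCompl hδexact.le
      (isCompl_biSup_maxGenEigenspace _ _) (mapsTo_biSup_maxGenEigenspace_of_comm hcomm _)
      (mapsTo_biSup_maxGenEigenspace_of_comm hcomm _)⟩

theorem stmt10 {V : Type} [AddCommGroup V] [Module ℂ V] [FiniteDimensional ℂ V]
    (p q : ℤ) (hpq : p ≤ q) (π : ℤ → Module.End ℂ V)
    (hidem : ∀ i, π i * π i = π i)
    (horth : ∀ i j, i ≠ j → π i * π j = 0)
    (hsupp : ∀ i, i ∉ Finset.Icc p q → π i = 0)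
    (hsum : ∑ i ∈ Finset.Icc p q, π i = 1)
    (d δ : Module.End ℂ V)
    (hd : ∀ i, d * π i = π (i + 1) * d)
    (hδ : ∀ i, δ * π i = π (i - 1) * δ)
    (hdd : d * d = 0)
    (hδδ : δ * δ = 0)
    (hδexact : LinearMap.ker δ = LinearMap.range δ)
    (a : ℝ) (ha : 0 < a)
    (hspec : ∀ μ : ℂ,
      LinearMap.ker ((d * δ + δ * d) - μ • (1 : Module.End ℂ V)) ≠ ⊥ →
      ‖μ‖ ≠ a) :
    (∀ x ∈ genEigLt (d * δ + δ * d) a, δ x ∈ genEigLt (d * δ + δ * d) a) ∧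
    (∀ x ∈ genEigLt (d * δ + δ * d) a, δ x = 0 →
      ∃ y ∈ genEigLt (d * δ + δ * d) a, δ y = x) :=
  stmt10_general d δ hδδ hδexact a
end

section
/- Let V be a finite-dimensional real vector space and A : V → V a linear endomorphism such that every complex eigenvalue of A has modulus > 1. Then A is invertible, det(id_V − A) ≠ 0, and (−1)^{dim V} · det(id_V − A) · det(A) > 0, i.e. sgn(det(id_V − A)) = (−1)^{dim V} · sgn(det A). (Second identity of Proposition 3.2.) -/
/-!
Write `p` for the characteristic polynomial of `A` and `n = dim V`. Then `det A = (-1)^n p(0)` and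
`det(1 - A) = p(1)`. Since `p` has no complex root in the closed unit disc, it has no real root
in `[0, 1]`, so by the intermediate value theorem `p(0)` and `p(1)` are nonzero with the same sign.
-/

open Polynomial

lemma mul_pos_of_continuousOn_Icc_of_ne_zero {f : ℝ → ℝ} {a b : ℝ} (hab : a ≤ b)
    (hf : ContinuousOn f (Set.Icc a b)) (hne : ∀ x ∈ Set.Icc a b, f x ≠ 0) :
    0 < f a * f b := by
  by_contra! hle
  have hzero : (0 : ℝ) ∈ Set.uIcc (f a) (f b) := by
    rcases mul_nonpos_iff.mp hle with ⟨ha, hb⟩ | ⟨ha, hb⟩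
    · exact Set.mem_uIcc.mpr (Or.inr ⟨hb, ha⟩)
    · exact Set.mem_uIcc.mpr (Or.inl ⟨ha, hb⟩)
  obtain ⟨c, hc, hfc⟩ := intermediate_value_uIcc (Set.uIcc_of_le hab ▸ hf) hzero
  exact hne c (Set.uIcc_of_le hab ▸ hc) hfc

lemma Real.sign_eq_of_mul_pos {x y : ℝ} (h : 0 < x * y) : Real.sign x = Real.sign y := by
  rcases mul_pos_iff.mp h with ⟨hx, hy⟩ | ⟨hx, hy⟩
  · rw [Real.sign_of_pos hx, Real.sign_of_pos hy]
  · rw [Real.sign_of_neg hx, Real.sign_of_neg hy]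

lemma Real.sign_neg_one_pow_mul (n : ℕ) (x : ℝ) :
    Real.sign ((-1) ^ n * x) = (-1) ^ n * Real.sign x := by
  rcases neg_one_pow_eq_or ℝ n with h | h <;> simp [h, Real.sign_neg]

lemma Polynomial.eval_ne_zero_of_abs_le_one {p : ℝ[X]}
    (hroots : ∀ z : ℂ, aeval z p = 0 → 1 < ‖z‖) {t : ℝ} (ht : |t| ≤ 1) : p.eval t ≠ 0 := by
  intro hpt
  have hroot : aeval (t : ℂ) p = 0 := by
    rw [← Complex.coe_algebraMap, aeval_algebraMap_apply_eq_algebraMap_eval, hpt, map_zero]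
  have hnorm := hroots _ hroot
  rw [Complex.norm_real, Real.norm_eq_abs] at hnorm
  linarith

lemma Polynomial.eval_zero_mul_eval_one_pos {p : ℝ[X]}
    (hroots : ∀ z : ℂ, aeval z p = 0 → 1 < ‖z‖) : 0 < p.eval 0 * p.eval 1 :=
  mul_pos_of_continuousOn_Icc_of_ne_zero zero_le_one p.continuous.continuousOn
    fun _ hx ↦ p.eval_ne_zero_of_abs_le_one hroots (abs_le.mpr ⟨by linarith [hx.1], hx.2⟩)

lemma LinearMap.det_one_sub_eq_eval_one_charpoly {R M : Type*} [CommRing R]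
    [AddCommGroup M] [Module R M] [Module.Free R M] [Module.Finite R M] (f : Module.End R M) :
    LinearMap.det (1 - f) = f.charpoly.eval 1 := by
  rw [LinearMap.eval_charpoly, map_one]

theorem stmt14 {V : Type} [AddCommGroup V] [Module ℝ V] [FiniteDimensional ℝ V]
    (A : Module.End ℝ V)
    (hexp : ∀ z : ℂ, Polynomial.aeval z (LinearMap.charpoly A) = 0 → 1 < ‖z‖) :
    Function.Bijective A ∧
    LinearMap.det ((1 : Module.End ℝ V) - A) ≠ 0 ∧
    0 < (-1 : ℝ) ^ (Module.finrank ℝ V) *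
      (LinearMap.det ((1 : Module.End ℝ V) - A) * LinearMap.det A) ∧
    Real.sign (LinearMap.det ((1 : Module.End ℝ V) - A))
      = (-1 : ℝ) ^ (Module.finrank ℝ V) * Real.sign (LinearMap.det A) := by
  set n := Module.finrank ℝ V
  have hsame := A.charpoly.eval_zero_mul_eval_one_pos hexp
  have hdet : LinearMap.det A = (-1) ^ n * A.charpoly.eval 0 := by
    rw [LinearMap.det_eq_sign_charpoly_coeff, coeff_zero_eq_eval_zero]
  have hprod : (-1 : ℝ) ^ n * (LinearMap.det (1 - A) * LinearMap.det A) =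
      A.charpoly.eval 0 * A.charpoly.eval 1 := by
    have hsq : (-1 : ℝ) ^ n * (-1) ^ n = 1 := by rw [← mul_pow]; simp
    rw [hdet, A.det_one_sub_eq_eval_one_charpoly]
    linear_combination (A.charpoly.eval 0 * A.charpoly.eval 1) * hsq
  have hpos : 0 < (-1 : ℝ) ^ n * (LinearMap.det (1 - A) * LinearMap.det A) := hprod ▸ hsame
  refine ⟨?_, left_ne_zero_of_mul (right_ne_zero_of_mul hpos.ne'), hpos, ?_⟩
  · rw [← Module.End.isUnit_iff, LinearMap.isUnit_iff_isUnit_det, isUnit_iff_ne_zero]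
    exact right_ne_zero_of_mul (right_ne_zero_of_mul hpos.ne')
  · rw [← Real.sign_neg_one_pow_mul]
    exact Real.sign_eq_of_mul_pos (by rwa [mul_left_comm])
end
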